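/- Let m ≥ 3, F ∈ ℤ_m[X_1,...,X_d] of degree k ≥ 2 with g_F = 1, and B ⊆ [0,1]^d a cube of side 1/h. Then N_F(B) ≤ (m/h)^{d − k/(2r(k+1)) + o(1)} + m^{d − 1/(2r(k+1)) + o(1)} h^{−d+o(1)} as m/h → ∞, where r = binomial(k+d,d) − 1. -/

import Mathlib

/-!
Let `R` be the number of monomials of degree at most `k` in `d` variables. In a box of side `ℓ`
with `R! ℓ^(kR) < m`, the zeros of `F` modulo `m` lie on a nonzero rational polynomial of degree
at most `k`. Otherwise the monomial vectors of `R` of them form an integer matrix with nonzero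
determinant; this matrix kills the coefficient vector of `F` modulo `m`, whose entries generate
the unit ideal because `g_F = 1` (a condition stable under translating the box to the origin), so
`m` divides the determinant, while expanding the determinant bounds it by `R! ℓ^(kR) < m`. By Schwartz–Zippel such a box contains at most `k ℓ^(d-1)` zeros.
Cutting the cube of side `L = m/h` into blocks of side `ℓ ≈ min (m^β, L)` with
`β = 1/(2r(k+1)) - ε'` gives `N_F(B) ≪ L^d / min (m^β, L) ≤ L^d m^(-β) + L^(d-1)`.
-/

open MvPolynomial Finset Matrix
open scoped Nat

theorem Matrix.det_eq_zero_of_mulVec_eq_zero {R n : Type*} [CommRing R] [Fintype n]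
    [DecidableEq n] {A : Matrix n n R} {c : n → R} (hAc : A *ᵥ c = 0)
    (hc : Ideal.span (Set.range c) = ⊤) : A.det = 0 := by
  have hdet : A.det • c = 0 := by
    calc A.det • c = (A.adjugate * A) *ᵥ c := by rw [adjugate_mul, smul_mulVec, one_mulVec]
      _ = 0 := by rw [← mulVec_mulVec, hAc, mulVec_zero]
  have hle : Ideal.span (Set.range c) ≤ LinearMap.ker (LinearMap.mulLeft R A.det) :=
    Ideal.span_le.mpr <| Set.range_subset_iff.mpr fun τ => congrFun hdet τ
  simpa using hle (hc ▸ Submodule.mem_top : (1 : R) ∈ Ideal.span (Set.range c))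

theorem exists_det_ne_zero_of_span_eq_top {K ι κ : Type*} [Field K] [Fintype κ] [DecidableEq κ]
    (w : ι → κ → K) (hw : Submodule.span K (Set.range w) = ⊤) :
    ∃ p : κ → ι, (Matrix.of fun j => w (p j)).det ≠ 0 := by
  obtain ⟨κ', a, -, hspan, hli⟩ := exists_linearIndependent' K w
  let e : κ' ≃ κ := (Module.Basis.mk hli (by rw [hspan, hw])).indexEquiv (Pi.basisFun K κ)
  refine ⟨a ∘ e.symm, ?_⟩
  rw [← isUnit_iff_ne_zero, ← isUnit_iff_isUnit_det, ← linearIndependent_rows_iff_isUnit]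
  exact hli.comp _ e.symm.injective

theorem exists_ne_zero_forall_dotProduct_eq_zero {K ι κ : Type*} [Field K] [Fintype κ]
    [DecidableEq κ] (w : ι → κ → K) (hw : Submodule.span K (Set.range w) ≠ ⊤) :
    ∃ c : κ → K, c ≠ 0 ∧ ∀ i, c ⬝ᵥ w i = 0 := by
  obtain ⟨f, hf, hker⟩ := Submodule.exists_le_ker_of_lt_top _ hw.lt_top
  have hfc : ∀ v, f v = (fun τ => f (Pi.single τ 1)) ⬝ᵥ v := fun v => by
    rw [LinearMap.pi_apply_eq_sum_univ f v, dotProduct]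
    refine sum_congr rfl fun τ _ => ?_
    rw [smul_eq_mul, mul_comm]
    congr 2
    ext j
    simp [Pi.single_apply, eq_comm]
  refine ⟨fun τ => f (Pi.single τ 1), fun h => hf (LinearMap.ext fun v => ?_), fun i => ?_⟩
  · rw [hfc, h, zero_dotProduct, LinearMap.zero_apply]
  · rw [← hfc]
    exact hker (Submodule.subset_span ⟨i, rfl⟩)

namespace MvPolynomial

theorem coeff_bind₁_mem_span_coeff {R σ τ : Type*} [CommRing R]
    (f : σ → MvPolynomial τ R) (p : MvPolynomial σ R) (s : τ →₀ ℕ) :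
    (bind₁ f p).coeff s ∈ Ideal.span (Set.range p.coeff) := by
  have hp : p ∈ Ideal.map (C : R →+* MvPolynomial σ R) (Ideal.span (Set.range p.coeff)) :=
    mem_map_C_iff.mpr fun s => Ideal.subset_span ⟨s, rfl⟩
  have hmap := Ideal.mem_map_of_mem (bind₁ f : MvPolynomial σ R →ₐ[R] MvPolynomial τ R).toRingHom hp
  rw [Ideal.map_map, show (bind₁ f : MvPolynomial σ R →ₐ[R] MvPolynomial τ R).toRingHom.comp C
    = C from RingHom.ext (bind₁_C_right f)] at hmap
  exact mem_map_C_iff.mp hmap s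

theorem totalDegree_bind₁_le {R σ τ : Type*} [CommSemiring R]
    {f : σ → MvPolynomial τ R} (hf : ∀ i, (f i).totalDegree ≤ 1) (p : MvPolynomial σ R) :
    (bind₁ f p).totalDegree ≤ p.totalDegree := by
  conv_lhs => rw [p.as_sum, map_sum]
  refine (totalDegree_finsetSum _ _).trans (Finset.sup_le fun s hs => ?_)
  rw [bind₁_monomial]
  refine (totalDegree_mul _ _).trans ?_
  rw [totalDegree_C, zero_add]
  refine (totalDegree_finsetProd _ _).trans ((sum_le_sum fun i _ => ?_).trans (le_totalDegree hs))
  exact (totalDegree_pow _ _).trans (by simpa using Nat.mul_le_mul_left (s i) (hf i))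

section Translate

variable {R σ : Type*} [CommRing R]

theorem eval_bind₁_X_add_C (v y : σ → R) (F : MvPolynomial σ R) :
    eval y (bind₁ (fun i => X i + C (v i)) F) = eval (y + v) F := by
  have := eval₂Hom_bind₁ (RingHom.id R) y (fun i => X i + C (v i)) F
  simpa [Pi.add_def] using this

theorem totalDegree_bind₁_X_add_C_le (v : σ → R) (F : MvPolynomial σ R) :
    (bind₁ (fun i => X i + C (v i)) F).totalDegree ≤ F.totalDegree :=
  totalDegree_bind₁_le (fun i => (totalDegree_add _ _).trans (by
    rw [totalDegree_C, Nat.max_zero, X]; exact (totalDegree_monomial_le _ _).trans (by simp))) F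

theorem span_coeff_le_span_coeff_bind₁_X_add_C (v : σ → R) (F : MvPolynomial σ R) :
    Ideal.span (Set.range F.coeff) ≤
      Ideal.span (Set.range (bind₁ (fun i => X i + C (v i)) F).coeff) := by
  have hinv : bind₁ (fun i => X i - C (v i)) (bind₁ (fun i => X i + C (v i)) F) = F := by
    rw [bind₁_bind₁]
    conv_rhs => rw [← AlgHom.id_apply (R := R) F, ← bind₁_X_left]
    congr 2
    funext i
    simp
  refine Ideal.span_le.mpr <| Set.range_subset_iff.mpr fun s => ?_
  have := coeff_bind₁_mem_span_coeff (fun i => X i - C (v i)) (bind₁ (fun i => X i + C (v i)) F) s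
  rwa [hinv] at this

end Translate

theorem card_filter_eval_eq_zero_mul_le {K : Type*} [CommRing K] [IsDomain K]
    [DecidableEq K] {n : ℕ} {P : MvPolynomial (Fin n) K} (hP : P ≠ 0) (G : Finset K) :
    #{x ∈ Fintype.piFinset fun _ => G | eval x P = 0} * #G ≤ P.totalDegree * #G ^ n := by
  rcases G.eq_empty_or_nonempty with rfl | hG
  · simp
  have hsz := schwartz_zippel_totalDegree hP G
  rw [div_le_div_iff₀ (by positivity) (by exact_mod_cast hG.card_pos)] at hsz
  exact_mod_cast hsz

end MvPolynomial

noncomputable def monomialsDegLE (d k : ℕ) : Finset (Fin d →₀ ℕ) :=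
  (range (k + 1)).biUnion fun n => univ.finsuppAntidiag n

theorem mem_monomialsDegLE {d k : ℕ} {τ : Fin d →₀ ℕ} :
    τ ∈ monomialsDegLE d k ↔ τ.degree ≤ k := by
  simp [monomialsDegLE, Finsupp.degree_eq_sum]

theorem card_monomialsDegLE_le {d : ℕ} (hd : 0 < d) (k : ℕ) :
    #(monomialsDegLE d k) ≤ (k + d).choose d := by
  obtain ⟨d, rfl⟩ := Nat.exists_eq_succ_of_ne_zero hd.ne'
  calc #(monomialsDegLE (d + 1) k)
      ≤ ∑ n ∈ range (k + 1), #((univ : Finset (Fin (d + 1))).finsuppAntidiag n) :=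
        card_biUnion_le
    _ = ∑ n ∈ range (k + 1), (n + d).choose d := by
        refine sum_congr rfl fun n _ => ?_
        rw [card_finsuppAntidiag_nat_eq_choose, card_univ, Fintype.card_fin,
          show d + 1 + n - 1 = n + d by omega, Nat.choose_symm_add]
    _ = (k + (d + 1)).choose (d + 1) := by
        rw [Nat.sum_range_add_choose]; ring_nf

theorem mul_card_monomialsDegLE_le {d : ℕ} (hd : 0 < d) (k : ℕ) :
    k * #(monomialsDegLE d k) ≤ 2 * ((k + d).choose d - 1) * (k + 1) := by
  rcases Nat.eq_zero_or_pos k with rfl | hk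
  · simp
  have hR := card_monomialsDegLE_le hd k
  have h2 : 2 ≤ (k + d).choose d := by
    have := Nat.choose_le_choose d (show d + 1 ≤ k + d by omega)
    rw [Nat.choose_succ_self_right] at this
    omega
  obtain ⟨r, hr⟩ : ∃ r, (k + d).choose d = r + 1 := ⟨_, (Nat.sub_add_cancel (by omega)).symm⟩
  rw [hr, Nat.add_sub_cancel]
  nlinarith

theorem MvPolynomial.support_subset_monomialsDegLE {R : Type*} [CommSemiring R] {d k : ℕ}
    {F : MvPolynomial (Fin d) R} (hF : F.totalDegree ≤ k) : F.support ⊆ monomialsDegLE d k :=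
  fun _ hτ => mem_monomialsDegLE.mpr ((le_totalDegree hτ).trans hF)

section MonomialMatrix

variable {d k m : ℕ}

def monomialMatrix {R : Type*} [CommRing R] (k : ℕ) (p : monomialsDegLE d k → Fin d → R) :
    Matrix (monomialsDegLE d k) (monomialsDegLE d k) R :=
  Matrix.of fun j τ => ∏ i, p j i ^ (τ : Fin d →₀ ℕ) i

theorem monomialMatrix_mulVec_coeff {R : Type*} [CommRing R] {F : MvPolynomial (Fin d) R}
    (hdeg : F.totalDegree ≤ k) (p : monomialsDegLE d k → Fin d → R) :
    monomialMatrix k p *ᵥ (fun τ => F.coeff τ) = fun j => eval (p j) F := by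
  funext j
  rw [eval_eq', sum_subset (support_subset_monomialsDegLE hdeg)
    fun τ _ hτ => by rw [notMem_support_iff.mp hτ, zero_mul], ← sum_coe_sort]
  exact sum_congr rfl fun τ _ => mul_comm _ _

theorem span_coeff_monomialsDegLE_eq_top {R : Type*} [CommRing R] {F : MvPolynomial (Fin d) R}
    (hF : Ideal.span (Set.range F.coeff) = ⊤) (hdeg : F.totalDegree ≤ k) :
    Ideal.span (Set.range fun τ : monomialsDegLE d k => F.coeff τ) = ⊤ := by
  refine top_unique (hF ▸ Ideal.span_le.mpr (Set.range_subset_iff.mpr fun s => ?_))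
  by_cases hs : s ∈ F.support
  · exact Ideal.subset_span ⟨⟨s, support_subset_monomialsDegLE hdeg hs⟩, rfl⟩
  · rw [notMem_support_iff.mp hs]
    exact zero_mem _

theorem dvd_det_monomialMatrix {F : MvPolynomial (Fin d) (ZMod m)}
    (hF : Ideal.span (Set.range F.coeff) = ⊤) (hdeg : F.totalDegree ≤ k)
    (p : monomialsDegLE d k → Fin d → ℤ) (hp : ∀ j, eval (fun i => (p j i : ZMod m)) F = 0) :
    (m : ℤ) ∣ (monomialMatrix k p).det := by
  rw [← ZMod.intCast_zmod_eq_zero_iff_dvd, ← eq_intCast (Int.castRingHom _), RingHom.map_det]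
  refine det_eq_zero_of_mulVec_eq_zero ?_ (span_coeff_monomialsDegLE_eq_top hF hdeg)
  have hmap : (Int.castRingHom (ZMod m)).mapMatrix (monomialMatrix k p) =
      monomialMatrix k fun j i => (p j i : ZMod m) := by
    ext j τ
    simp [monomialMatrix]
  rw [hmap, monomialMatrix_mulVec_coeff hdeg]
  exact funext hp

theorem abs_det_monomialMatrix_le {ℓ : ℕ} (hℓ : 1 ≤ ℓ) (p : monomialsDegLE d k → Fin d → ℤ)
    (hp : ∀ j i, |p j i| ≤ ℓ) :
    |(monomialMatrix k p).det| ≤ (#(monomialsDegLE d k))! * ℓ ^ (k * #(monomialsDegLE d k)) := by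
  have hentry : ∀ j τ, |monomialMatrix k p j τ| ≤ (ℓ : ℤ) ^ k := fun j τ => by
    calc |monomialMatrix k p j τ| = ∏ i, |p j i| ^ (τ : Fin d →₀ ℕ) i := by
          simp [monomialMatrix, abs_prod, abs_pow]
      _ ≤ ∏ i, (ℓ : ℤ) ^ (τ : Fin d →₀ ℕ) i := by gcongr with i; exact hp j i
      _ = (ℓ : ℤ) ^ (τ : Fin d →₀ ℕ).degree := by rw [prod_pow_eq_pow_sum, Finsupp.degree_eq_sum]
      _ ≤ (ℓ : ℤ) ^ k := pow_le_pow_right₀ (by exact_mod_cast hℓ) (mem_monomialsDegLE.mp τ.2)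
  simpa [pow_mul] using det_le (abv := AbsoluteValue.abs) hentry

end MonomialMatrix

section Counting

variable {d k m : ℕ}

theorem exists_rat_poly_vanishing_on_zeros
    {F : MvPolynomial (Fin d) (ZMod m)} (hF : Ideal.span (Set.range F.coeff) = ⊤)
    (hdeg : F.totalDegree ≤ k) {ℓ : ℕ} (hℓ : 1 ≤ ℓ)
    (hsmall : (#(monomialsDegLE d k))! * ℓ ^ (k * #(monomialsDegLE d k)) < m)
    (S : Finset (Fin d → ℤ)) (hS : ∀ x ∈ S, ∀ i, |x i| ≤ ℓ)
    (hzero : ∀ x ∈ S, eval (fun i => (x i : ZMod m)) F = 0) :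
    ∃ P : MvPolynomial (Fin d) ℚ, P ≠ 0 ∧ P.totalDegree ≤ k ∧
      ∀ x ∈ S, eval (fun i => (x i : ℚ)) P = 0 := by
  let w : S → monomialsDegLE d k → ℚ := fun x τ => ∏ i, (x.1 i : ℚ) ^ (τ : Fin d →₀ ℕ) i
  by_cases hw : Submodule.span ℚ (Set.range w) = ⊤
  · exfalso
    obtain ⟨p, hp⟩ := exists_det_ne_zero_of_span_eq_top w hw
    let A := monomialMatrix k fun j => (p j).1
    have hA : A.det ≠ 0 := fun h => hp <| by
      have hmap : (Int.castRingHom ℚ).mapMatrix A = of fun j => w (p j) := by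
        ext j τ
        simp [A, monomialMatrix, w]
      rw [← hmap, ← RingHom.map_det, h, map_zero]
    have hdvd : (m : ℤ) ≤ |A.det| :=
      Int.le_of_dvd (abs_pos.mpr hA) ((dvd_abs _ _).mpr
        (dvd_det_monomialMatrix hF hdeg _ fun j => hzero _ (p j).2))
    have hbound := abs_det_monomialMatrix_le hℓ _ fun j => hS _ (p j).2
    exact (hdvd.trans_lt (hbound.trans_lt (by exact_mod_cast hsmall))).false
  obtain ⟨c, hc, hcw⟩ := exists_ne_zero_forall_dotProduct_eq_zero w hw
  let P : MvPolynomial (Fin d) ℚ := ∑ τ : monomialsDegLE d k, monomial τ.1 (c τ)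
  have hcoeff : ∀ τ : monomialsDegLE d k, P.coeff τ = c τ := fun τ => by
    simp [P, coeff_sum, coeff_monomial]
  refine ⟨P, fun h => hc (funext fun τ => by rw [← hcoeff, h, coeff_zero]; rfl), ?_, ?_⟩
  · exact totalDegree_finsetSum_le fun τ _ =>
      (totalDegree_monomial_le _ _).trans (mem_monomialsDegLE.mp τ.2)
  · intro x hx
    rw [← hcw ⟨x, hx⟩]
    simp [P, dotProduct, eval_monomial, Finsupp.prod_fintype, w]

theorem card_zeros_in_box_mul_le {P : MvPolynomial (Fin d) ℚ} (hP : P ≠ 0) {ℓ : ℕ}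
    (S : Finset (Fin d → ℤ)) (hS : ∀ x ∈ S, ∀ i, 0 ≤ x i ∧ x i < ℓ)
    (hzero : ∀ x ∈ S, eval (fun i => (x i : ℚ)) P = 0) :
    #S * ℓ ≤ P.totalDegree * ℓ ^ d := by
  let G : Finset ℚ := (range ℓ).image Nat.cast
  have hG : #G = ℓ := by rw [card_image_of_injective _ Nat.cast_injective, card_range]
  have hmaps : ∀ x ∈ S, (fun i => (x i : ℚ)) ∈
      {y ∈ Fintype.piFinset fun _ : Fin d => G | eval y P = 0} := fun x hx => by
    refine mem_filter.mpr ⟨Fintype.mem_piFinset.mpr fun i => mem_image.mpr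
      ⟨(x i).toNat, mem_range.mpr (by have := hS x hx i; omega), ?_⟩, hzero x hx⟩
    exact_mod_cast Int.toNat_of_nonneg (hS x hx i).1
  have hinj : Set.InjOn (fun x : Fin d → ℤ => fun i => (x i : ℚ)) S :=
    fun x _ y _ hxy => funext fun i => Int.cast_injective (congrFun hxy i)
  calc #S * ℓ ≤ #{y ∈ Fintype.piFinset fun _ : Fin d => G | eval y P = 0} * #G := by
        rw [hG]; exact Nat.mul_le_mul_right _ (card_le_card_of_injOn _ hmaps hinj)
    _ ≤ P.totalDegree * ℓ ^ d := hG ▸ card_filter_eval_eq_zero_mul_le hP G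

theorem card_zmod_zeros_in_block_mul_le
    {F : MvPolynomial (Fin d) (ZMod m)} (hF : Ideal.span (Set.range F.coeff) = ⊤)
    (hdeg : F.totalDegree ≤ k) {ℓ : ℕ} (hℓ : 1 ≤ ℓ)
    (hsmall : (#(monomialsDegLE d k))! * ℓ ^ (k * #(monomialsDegLE d k)) < m)
    (b : Fin d → ℤ) (S : Finset (Fin d → ℤ)) (hS : ∀ x ∈ S, ∀ i, b i ≤ x i ∧ x i < b i + ℓ)
    (hzero : ∀ x ∈ S, eval (fun i => (x i : ZMod m)) F = 0) :
    #S * ℓ ≤ k * ℓ ^ d := by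
  let G := bind₁ (fun i => X i + C (b i : ZMod m)) F
  let S' := S.image fun x => x - b
  have hS' : ∀ y ∈ S', ∀ i, 0 ≤ y i ∧ y i < ℓ := by
    simp only [S', mem_image]
    rintro _ ⟨x, hx, rfl⟩ i
    have := hS x hx i
    simp only [Pi.sub_apply]
    omega
  have hzero' : ∀ y ∈ S', eval (fun i => (y i : ZMod m)) G = 0 := by
    simp only [S', mem_image]
    rintro _ ⟨x, hx, rfl⟩
    rw [eval_bind₁_X_add_C]
    simpa [Pi.add_def] using hzero x hx
  obtain ⟨P, hP, hPdeg, hPzero⟩ := exists_rat_poly_vanishing_on_zeros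
    (top_unique (hF ▸ span_coeff_le_span_coeff_bind₁_X_add_C _ F))
    ((totalDegree_bind₁_X_add_C_le _ F).trans hdeg) hℓ hsmall S'
    (fun y hy i => abs_le.mpr (by have := hS' y hy i; constructor <;> omega)) hzero'
  calc #S * ℓ = #S' * ℓ := by rw [card_image_of_injective _ sub_left_injective]
    _ ≤ P.totalDegree * ℓ ^ d := card_zeros_in_box_mul_le hP S' hS' hPzero
    _ ≤ k * ℓ ^ d := Nat.mul_le_mul_right _ hPdeg

end Counting

theorem card_mul_le_of_forall_block {ι : Type*} [Fintype ι] [DecidableEq ι] {ℓ M K : ℕ}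
    (hℓ : 0 < ℓ) (c : ι → ℤ) (S : Finset (ι → ℤ)) (hS : ∀ x ∈ S, ∀ i, c i ≤ x i ∧ x i ≤ c i + M)
    (hK : ∀ (b : ι → ℤ) (T : Finset (ι → ℤ)), T ⊆ S →
      (∀ x ∈ T, ∀ i, b i ≤ x i ∧ x i < b i + ℓ) → #T * ℓ ≤ K) :
    #S * ℓ ≤ (M / ℓ + 1) ^ Fintype.card ι * K := by
  let q : (ι → ℤ) → ι → ℤ := fun x i => (x i - c i) / ℓ
  have hℓ' : (0 : ℤ) < ℓ := by exact_mod_cast hℓ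
  have himage : S.image q ⊆ Fintype.piFinset fun _ => Icc 0 ((M / ℓ : ℕ) : ℤ) := by
    simp only [subset_iff, mem_image, Fintype.mem_piFinset, mem_Icc]
    rintro _ ⟨x, hx, rfl⟩ i
    have := hS x hx i
    exact ⟨Int.ediv_nonneg (by omega) hℓ'.le,
      (Int.ediv_le_ediv hℓ' (by omega : x i - c i ≤ M)).trans_eq (by push_cast; rfl)⟩
  have hfiber : ∀ a, ∀ x ∈ {x ∈ S | q x = a}, ∀ i, c i + ℓ * a i ≤ x i ∧
      x i < c i + ℓ * a i + ℓ := by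
    intro a x hx i
    obtain ⟨-, rfl⟩ := mem_filter.mp hx
    have h1 := Int.mul_ediv_add_emod (x i - c i) ℓ
    have h2 := Int.emod_nonneg (x i - c i) hℓ'.ne'
    have h3 := Int.emod_lt_of_pos (x i - c i) hℓ'
    constructor <;> linarith
  calc #S * ℓ = ∑ a ∈ S.image q, #{x ∈ S | q x = a} * ℓ := by
        rw [card_eq_sum_card_image q S, sum_mul]
    _ ≤ ∑ _a ∈ S.image q, K := sum_le_sum fun a _ =>
        hK _ _ (filter_subset _ _) (hfiber a)
    _ = #(S.image q) * K := by rw [sum_const, smul_eq_mul]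
    _ ≤ (M / ℓ + 1) ^ Fintype.card ι * K := by
        refine Nat.mul_le_mul_right _ ((card_le_card himage).trans_eq ?_)
        rw [Fintype.card_piFinset, prod_const, card_univ, Int.card_Icc, sub_zero,
          ← Nat.cast_succ, Int.toNat_natCast]

theorem ceil_le_and_le_ceil_add_floor_of_div_mem_Icc {m h : ℕ} (hm : 0 < m) {a : ℝ} {x : ℤ}
    (hx : (x : ℝ) / m ∈ Set.Icc a (a + 1 / h)) :
    ⌈m * a⌉ ≤ x ∧ x ≤ ⌈m * a⌉ + ⌊(m : ℝ) / h⌋₊ := by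
  have hm' : (0 : ℝ) < m := by exact_mod_cast hm
  obtain ⟨h1, h2⟩ := hx
  rw [le_div_iff₀ hm'] at h1
  rw [div_le_iff₀ hm', add_mul, one_div_mul_eq_div] at h2
  refine ⟨Int.ceil_le.mpr (by linarith), ?_⟩
  have h3 : ((x - ⌈m * a⌉ : ℤ) : ℝ) ≤ m / h := by
    push_cast; linarith [Int.le_ceil ((m : ℝ) * a)]
  have h4 := Int.le_floor.mpr h3
  rw [← Int.natCast_floor_eq_floor (by positivity)] at h4
  omega

section Cube

variable {d k m : ℕ}

theorem card_zeros_in_cube_le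
    {F : MvPolynomial (Fin d) (ZMod m)} (hF : Ideal.span (Set.range F.coeff) = ⊤)
    (hdeg : F.totalDegree ≤ k) {ℓ : ℕ} (hℓ : 1 ≤ ℓ)
    (hsmall : (#(monomialsDegLE d k))! * ℓ ^ (k * #(monomialsDegLE d k)) < m)
    {h : ℕ} (a : Fin d → ℝ) :
    (Nat.card {x : Fin d → ℤ // (∀ i, (x i : ℝ) / m ∈ Set.Icc (a i) (a i + 1 / h)) ∧
        eval (fun i => (x i : ZMod m)) F = 0} : ℝ) ≤ k * ((m : ℝ) / h + ℓ) ^ d / ℓ := by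
  set M := ⌊(m : ℝ) / h⌋₊
  let c : Fin d → ℤ := fun i => ⌈m * a i⌉
  let S : Finset (Fin d → ℤ) := {x ∈ Fintype.piFinset fun i => Icc (c i) (c i + M) |
    eval (fun i => (x i : ZMod m)) F = 0}
  have hm : 0 < m := (Nat.zero_le _).trans_lt hsmall
  have hN : Nat.card {x : Fin d → ℤ // (∀ i, (x i : ℝ) / m ∈ Set.Icc (a i) (a i + 1 / h)) ∧
      eval (fun i => (x i : ZMod m)) F = 0} ≤ #S := by
    rw [← Nat.card_eq_finsetCard]
    refine Nat.card_le_card_of_injective (fun x => ⟨x.1, mem_filter.mpr ⟨?_, x.2.2⟩⟩) ?_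
    · exact Fintype.mem_piFinset.mpr fun i =>
        mem_Icc.mpr (ceil_le_and_le_ceil_add_floor_of_div_mem_Icc hm (x.2.1 i))
    · exact fun x y hxy => Subtype.ext (by simpa using congrArg Subtype.val hxy)
  have hcount : #S * ℓ ≤ (M / ℓ + 1) ^ d * (k * ℓ ^ d) := by
    simpa using card_mul_le_of_forall_block hℓ c S
      (fun x hx i => mem_Icc.mp (Fintype.mem_piFinset.mp (mem_filter.mp hx).1 i))
      fun b T hTS hT => card_zmod_zeros_in_block_mul_le hF hdeg hℓ hsmall b T hT
        fun x hx => (mem_filter.mp (hTS hx)).2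
  have hblocks : ((M / ℓ + 1 : ℕ) : ℝ) * ℓ ≤ (m : ℝ) / h + ℓ := by
    have hdiv : ((M / ℓ : ℕ) : ℝ) * ℓ ≤ M := by exact_mod_cast Nat.div_mul_le_self M ℓ
    have hM : (M : ℝ) ≤ (m : ℝ) / h := Nat.floor_le (by positivity)
    push_cast
    linarith
  rw [le_div_iff₀ (by exact_mod_cast hℓ)]
  calc (Nat.card _ : ℝ) * ℓ ≤ #S * ℓ := by gcongr
    _ ≤ (M / ℓ + 1 : ℕ) ^ d * (k * ℓ ^ d) := by exact_mod_cast hcount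
    _ = k * (((M / ℓ + 1 : ℕ) : ℝ) * ℓ) ^ d := by ring
    _ ≤ k * ((m : ℝ) / h + ℓ) ^ d := by gcongr

theorem card_zeros_in_cube_le_rpow
    {F : MvPolynomial (Fin d) (ZMod m)} (hF : Ideal.span (Set.range F.coeff) = ⊤)
    (hdeg : F.totalDegree ≤ k) {β : ℝ} (hβ : 0 ≤ β)
    (hsmall : ((#(monomialsDegLE d k))! : ℝ) * (2 * (m : ℝ) ^ β) ^ (k * #(monomialsDegLE d k)) < m)
    {h : ℕ} (hL : 1 ≤ (m : ℝ) / h) (a : Fin d → ℝ) :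
    (Nat.card {x : Fin d → ℤ // (∀ i, (x i : ℝ) / m ∈ Set.Icc (a i) (a i + 1 / h)) ∧
        eval (fun i => (x i : ZMod m)) F = 0} : ℝ) ≤
      3 ^ d * k * (((m : ℝ) / h) ^ d / (m : ℝ) ^ β + ((m : ℝ) / h) ^ d / ((m : ℝ) / h)) := by
  set L := (m : ℝ) / h
  have hm : (1 : ℝ) ≤ m := by
    rcases Nat.eq_zero_or_pos m with rfl | hm
    · simp [L] at hL; linarith
    · exact_mod_cast hm
  set μ := min ((m : ℝ) ^ β) L
  have hμ : 1 ≤ μ := le_min (Real.one_le_rpow hm hβ) hL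
  have hℓ : 1 ≤ ⌈μ⌉₊ := Nat.one_le_ceil_iff.mpr (by linarith)
  have hℓμ : (⌈μ⌉₊ : ℝ) ≤ 2 * μ := Nat.ceil_le_two_mul (by linarith)
  have hsmallℓ : (#(monomialsDegLE d k))! * ⌈μ⌉₊ ^ (k * #(monomialsDegLE d k)) < m := by
    have hℓβ : (⌈μ⌉₊ : ℝ) ≤ 2 * (m : ℝ) ^ β := hℓμ.trans (by gcongr; exact min_le_left _ _)
    have : ((#(monomialsDegLE d k))! : ℝ) * ⌈μ⌉₊ ^ (k * #(monomialsDegLE d k)) < m :=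
      lt_of_le_of_lt (by gcongr) hsmall
    exact_mod_cast this
  have hμL : μ ≤ L := min_le_right _ _
  calc _ ≤ k * (L + ⌈μ⌉₊) ^ d / ⌈μ⌉₊ := card_zeros_in_cube_le hF hdeg hℓ hsmallℓ a
    _ ≤ k * (3 * L) ^ d / μ := by gcongr <;> first | linarith | exact Nat.le_ceil μ
    _ = 3 ^ d * k * (L ^ d / μ) := by ring
    _ ≤ 3 ^ d * k * (L ^ d / (m : ℝ) ^ β + L ^ d / L) := by
        gcongr
        have hLd : 0 ≤ L ^ d := pow_nonneg (by linarith) d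
        rcases min_choice ((m : ℝ) ^ β) L with h' | h' <;> rw [show μ = _ from h']
        · exact le_add_of_nonneg_right (div_nonneg hLd (by linarith))
        · exact le_add_of_nonneg_left (div_nonneg hLd (by positivity))

end Cube

theorem mul_mul_rpow_pow_lt {A B m ε' D : ℝ} {n : ℕ} (hm : 1 ≤ m) (hε' : 0 < ε')
    (hn : 1 ≤ n) (hnD : n ≤ D) (hA : A * B ^ n < m ^ ε') :
    A * (B * m ^ (1 / D - ε')) ^ n < m := by
  have hD : 0 < D := by linarith [(Nat.one_le_cast (α := ℝ)).mpr hn]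
  have hexp : ε' + (1 / D - ε') * n ≤ 1 := by
    have h1 : 1 / D * n ≤ 1 := by rw [one_div_mul_eq_div, div_le_one hD]; exact hnD
    have h2 : (1 : ℝ) ≤ n := by exact_mod_cast hn
    nlinarith
  calc A * (B * m ^ (1 / D - ε')) ^ n = A * B ^ n * m ^ ((1 / D - ε') * n) := by
        rw [mul_pow, ← Real.rpow_natCast (m ^ _), ← Real.rpow_mul (by linarith)]; ring
    _ < m ^ ε' * m ^ ((1 / D - ε') * n) := by gcongr
    _ = m ^ (ε' + (1 / D - ε') * n) := (Real.rpow_add (by linarith) _ _).symm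
    _ ≤ m := by simpa using Real.rpow_le_rpow_of_exponent_le hm hexp

theorem mul_pow_div_self_le_rpow {C L e : ℝ} (d : ℕ) (hL : 0 < L) (hC : C ≤ L ^ (1 - e)) :
    C * (L ^ d / L) ≤ L ^ ((d : ℝ) - e) :=
  calc C * (L ^ d / L) ≤ L ^ (1 - e) * (L ^ d / L) := by gcongr
    _ = L ^ ((d : ℝ) - e) := by
        rw [← Real.rpow_natCast, ← Real.rpow_sub_one hL.ne', ← Real.rpow_add hL]
        ring_nf

theorem mul_div_pow_div_rpow_le {C m h δ ε ε' : ℝ} (d : ℕ) (hm : 0 < m) (hh : 1 ≤ h)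
    (hε : 0 ≤ ε) (hC : C ≤ m ^ (ε - ε')) :
    C * ((m / h) ^ d / m ^ (δ - ε')) ≤ m ^ ((d : ℝ) - δ + ε) * h ^ (-(d : ℝ) + ε) :=
  calc C * ((m / h) ^ d / m ^ (δ - ε')) ≤ m ^ (ε - ε') * ((m / h) ^ d / m ^ (δ - ε')) := by
        gcongr
    _ = m ^ ((d : ℝ) - δ + ε) * h ^ (-(d : ℝ)) := by
        rw [div_pow, ← Real.rpow_natCast, ← Real.rpow_natCast h, Real.rpow_neg (by linarith),
          show (d : ℝ) - δ + ε = (ε - ε') + d - (δ - ε') by ring, Real.rpow_sub hm (_ + _),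
          Real.rpow_add hm]
        ring
    _ ≤ m ^ ((d : ℝ) - δ + ε) * h ^ (-(d : ℝ) + ε) := by
        gcongr
        linarith

theorem card_zeros_in_cube_eventually_le {d k : ℕ} {D : ℝ}
    (hkR : 1 ≤ k * #(monomialsDegLE d k)) (hD : (k * #(monomialsDegLE d k) : ℕ) ≤ D)
    (ε : ℝ) (hε : 0 < ε) :
    ∃ T : ℝ, ∀ m h : ℕ, 1 ≤ h → T ≤ (m : ℝ) / h →
      ∀ F : MvPolynomial (Fin d) (ZMod m), Ideal.span (Set.range F.coeff) = ⊤ →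
      F.totalDegree ≤ k → ∀ a : Fin d → ℝ,
      (Nat.card {x : Fin d → ℤ // (∀ i, (x i : ℝ) / m ∈ Set.Icc (a i) (a i + 1 / h)) ∧
          eval (fun i => (x i : ZMod m)) F = 0} : ℝ) ≤
        ((m : ℝ) / h) ^ ((d : ℝ) - k / D + ε) +
          (m : ℝ) ^ ((d : ℝ) - 1 / D + ε) * (h : ℝ) ^ (-(d : ℝ) + ε) := by
  have hk : (k : ℝ) ≤ (k * #(monomialsDegLE d k) : ℕ) := by
    exact_mod_cast Nat.le_mul_of_pos_right k (Nat.pos_of_ne_zero fun h => by simp [h] at hkR)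
  have hD0 : 0 < D := by linarith [(Nat.one_le_cast (α := ℝ)).mpr hkR]
  -- blocks have side about `m ^ (1 / D - ε')`; the slack `ε'` absorbs the constant `R! 2 ^ (kR)`
  set ε' := min ε (1 / D) / 2
  have hε' : 0 < ε' := by positivity
  have hε'D : ε' ≤ 1 / D / 2 := div_le_div_of_nonneg_right (min_le_right _ _) two_pos.le
  have hε'ε : ε' ≤ ε / 2 := div_le_div_of_nonneg_right (min_le_left _ _) two_pos.le
  have hkD : (k : ℝ) / D ≤ 1 := (div_le_one hD0).mpr (hk.trans hD)
  obtain ⟨T, hT⟩ := Filter.eventually_atTop.mp <| (Filter.eventually_ge_atTop 1).and <|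
    ((tendsto_rpow_atTop hε').eventually_gt_atTop
      (((#(monomialsDegLE d k))! * 2 ^ (k * #(monomialsDegLE d k)) : ℕ) : ℝ)).and <|
    ((tendsto_rpow_atTop (by linarith : 0 < 1 - ((k : ℝ) / D - ε))).eventually_ge_atTop
      (3 ^ d * k : ℝ)).and
    ((tendsto_rpow_atTop (by linarith : 0 < ε - ε')).eventually_ge_atTop (3 ^ d * k : ℝ))
  refine ⟨T, fun m h hh hTL F hF hdeg a => ?_⟩
  obtain ⟨hL, hsmall, hC₁, hC₂⟩ := hT _ hTL
  have hLm : (m : ℝ) / h ≤ m := div_le_self (by positivity) (by exact_mod_cast hh)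
  have hcube := card_zeros_in_cube_le_rpow hF hdeg (by linarith)
    (mul_mul_rpow_pow_lt (hL.trans hLm) hε' hkR hD
      (by exact_mod_cast hsmall.trans_le (by gcongr))) hL a
  have h₁ := mul_pow_div_self_le_rpow d (by linarith) hC₁
  have h₂ := mul_div_pow_div_rpow_le (m := m) (h := h) (δ := 1 / D) d (by linarith)
    (by exact_mod_cast hh) hε.le (hC₂.trans (by gcongr; linarith))
  rw [show (d : ℝ) - ((k : ℝ) / D - ε) = d - k / D + ε by ring] at h₁
  linarith

/-- Corollary 3.2: for any cube `B ⊆ [0,1]^d` of side `1/h` and `F ∈ ℤ_m[X_1,...,X_d]` of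
degree `k ≥ 2` with `g_F = 1`,
`N_F(B) ≤ (m/h)^{d − k/(2r(k+1)) + o(1)} + m^{d − 1/(2r(k+1)) + o(1)} h^{−d+o(1)}`
as `m/h → ∞`, where `r = binom(k+d,d) − 1`. -/
theorem stmt_15 (d k : ℕ) (hd : 0 < d) (hk : 2 ≤ k) :
    ∀ ε : ℝ, 0 < ε → ∃ T : ℝ, ∀ m h : ℕ, 3 ≤ m → 1 ≤ h → T ≤ (m : ℝ) / (h : ℝ) →
      ∀ F : MvPolynomial (Fin d) (ZMod m), F.totalDegree = k →
      (∃ σ : Fin d →₀ ℕ, (σ.sum fun _ e => e) = k ∧ IsUnit (MvPolynomial.coeff σ F)) →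
      ∀ a : Fin d → ℝ, (∀ i, 0 ≤ a i) → (∀ i, a i + 1 / (h : ℝ) ≤ 1) →
      ((Nat.card {x : Fin d → ℤ //
          (∀ i, (x i : ℝ) / (m : ℝ) ∈ Set.Icc (a i) (a i + 1 / (h : ℝ))) ∧
          MvPolynomial.eval (fun i => ((x i : ℤ) : ZMod m)) F = 0} : ℕ) : ℝ)
        ≤ ((m : ℝ) / (h : ℝ))
            ^ ((d : ℝ) - (k : ℝ) / (2 * (((k + d).choose d - 1 : ℕ) : ℝ) * ((k : ℝ) + 1)) + ε)
          + (m : ℝ)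
              ^ ((d : ℝ) - 1 / (2 * (((k + d).choose d - 1 : ℕ) : ℝ) * ((k : ℝ) + 1)) + ε)
            * (h : ℝ) ^ (-(d : ℝ) + ε) := by
  intro ε hε
  obtain ⟨T, hT⟩ := card_zeros_in_cube_eventually_le (d := d) (k := k)
    (D := 2 * (((k + d).choose d - 1 : ℕ) : ℝ) * ((k : ℝ) + 1))
    (Nat.mul_pos (by omega) (card_pos.mpr ⟨0, mem_monomialsDegLE.mpr (by simp)⟩))
    (by exact_mod_cast mul_card_monomialsDegLE_le hd k) ε hε
  exact ⟨T, fun m h _ hh hTL F hFdeg ⟨σ, _, hσ⟩ a _ _ =>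
    hT m h hh hTL F (Ideal.eq_top_of_isUnit_mem _ (Ideal.subset_span ⟨σ, rfl⟩) hσ) hFdeg.le a⟩
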